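/- Let kl denote the Bernoulli KL divergence. For all real numbers x, y, d, c with 0 < x ≤ y < d ≤ c < 1, one has (c − x)/kl(x, d) ≤ (c − y)/kl(y, d). -/

import Mathlib

/-- Bernoulli KL divergence `kl(p,q)`. -/
noncomputable def klB (p q : ℝ) : ℝ :=
  p * Real.log (p / q) + (1 - p) * Real.log ((1 - p) / (1 - q))

open Real Set

lemma klB_pos {p d : ℝ} (hp : 0 < p) (hpd : p < d) (hd : d < 1) : 0 < klB p d := by
  have hp1 : p < 1 := hpd.trans hd
  have h1p : 0 < 1 - p := by linarith
  have h1d : 0 < 1 - d := by linarith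
  have hu : (0:ℝ) < d / p := div_pos (hp.trans hpd) hp
  have hv : (0:ℝ) < (1 - d) / (1 - p) := div_pos h1d h1p
  have huv : d / p ≠ (1 - d) / (1 - p) := by
    intro h
    rw [div_eq_div_iff hp.ne' h1p.ne'] at h
    nlinarith
  have key := strictConcaveOn_log_Ioi.2 (mem_Ioi.2 hu) (mem_Ioi.2 hv) huv hp h1p (by ring)
  have hsum : p • (d / p) + (1 - p) • ((1 - d) / (1 - p)) = 1 := by
    simp only [smul_eq_mul]
    field_simp
    ring
  rw [hsum, Real.log_one] at key
  have e1 : Real.log (p / d) = - Real.log (d / p) := by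
    rw [← Real.log_inv, inv_div]
  have e2 : Real.log ((1 - p) / (1 - d)) = - Real.log ((1 - d) / (1 - p)) := by
    rw [← Real.log_inv, inv_div]
  have hklB : klB p d = -(p • Real.log (d / p) + (1 - p) • Real.log ((1 - d) / (1 - p))) := by
    simp only [klB, e1, e2, smul_eq_mul]; ring
  rw [hklB]
  simp only [smul_eq_mul] at key ⊢
  linarith

lemma klB_convex_combo {x y d : ℝ} (hx : 0 < x) (hxy : x ≤ y) (hyd : y < d) (hd : d < 1) :
    klB y d ≤ ((d - y) / (d - x)) * klB x d := by
  set a := (d - y) / (d - x) with ha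
  set b := (y - x) / (d - x) with hb
  have hdx : 0 < d - x := by linarith
  have hab : a + b = 1 := by rw [ha, hb]; field_simp; ring
  have ha0 : 0 ≤ a := div_nonneg (by linarith) hdx.le
  have hb0 : 0 ≤ b := div_nonneg (by linarith) hdx.le
  have hy : y = a * x + b * d := by rw [ha, hb]; field_simp; ring
  have hy0 : 0 < y := lt_of_lt_of_le hx hxy
  have h1y : 0 < 1 - y := by linarith
  have h1x : 0 < 1 - x := by linarith
  have h1d : 0 < 1 - d := by linarith
  have h1y' : 1 - y = a * (1 - x) + b * (1 - d) := by
    have h : a * (1 - x) + b * (1 - d) = (a + b) - (a * x + b * d) := by ring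
    rw [h, hab, ← hy]
  have c1 : y * Real.log y ≤ a * (x * Real.log x) + b * (d * Real.log d) := by
    have h := Real.convexOn_mul_log.2 (mem_Ici.2 hx.le)
      (mem_Ici.2 (by linarith : (0:ℝ) ≤ d)) ha0 hb0 hab
    simpa [smul_eq_mul, ← hy] using h
  have c2 : (1 - y) * Real.log (1 - y)
      ≤ a * ((1 - x) * Real.log (1 - x)) + b * ((1 - d) * Real.log (1 - d)) := by
    have h := Real.convexOn_mul_log.2 (mem_Ici.2 h1x.le) (mem_Ici.2 h1d.le) ha0 hb0 hab
    simpa [smul_eq_mul, ← h1y'] using h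
  have expand : ∀ p : ℝ, 0 < p → p < 1 → klB p d =
      p * Real.log p + (1 - p) * Real.log (1 - p) - p * Real.log d
        - (1 - p) * Real.log (1 - d) := by
    intro p hp0 hp1
    have hp' : (0:ℝ) < 1 - p := by linarith
    rw [klB, Real.log_div hp0.ne' (by linarith : d ≠ 0),
      Real.log_div hp'.ne' h1d.ne']
    ring
  have hdd : klB d d = 0 := by
    simp [klB, div_self (by linarith : d ≠ 0), div_self h1d.ne']
  have hkly := expand y hy0 (by linarith)
  have hklx := expand x hx (by linarith)
  have hkld := expand d (by linarith) hd
  have main : klB y d ≤ a * klB x d + b * klB d d := by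
    rw [hkly, hklx, hkld]
    have lin : y * Real.log d + (1 - y) * Real.log (1 - d)
        = a * (x * Real.log d + (1 - x) * Real.log (1 - d))
          + b * (d * Real.log d + (1 - d) * Real.log (1 - d)) := by
      nth_rewrite 1 [hy]
      nth_rewrite 1 [h1y']
      ring
    nlinarith [c1, c2]
  rw [hdd] at main
  linarith

/-- (Monotonicity of the regret-to-information ratio.) For all real numbers
`0 < x ≤ y < d ≤ c < 1`, one has `(c − x)/kl(x, d) ≤ (c − y)/kl(y, d)`. -/
theorem ratio_monotone (x y d c : ℝ) (hx : 0 < x) (hxy : x ≤ y) (hyd : y < d)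
    (hdc : d ≤ c) (hc : c < 1) :
    (c - x) / klB x d ≤ (c - y) / klB y d := by
  have hd1 : d < 1 := lt_of_le_of_lt hdc hc
  have hKx : 0 < klB x d := klB_pos hx (lt_of_le_of_lt hxy hyd) hd1
  have hKy : 0 < klB y d := klB_pos (lt_of_lt_of_le hx hxy) hyd hd1
  rw [div_le_div_iff₀ hKx hKy]
  have hcombo := klB_convex_combo hx hxy hyd hd1
  have hdx : 0 < d - x := by linarith
  have hcx : 0 ≤ c - x := by linarith
  have hstep : (c - x) * ((d - y) / (d - x)) ≤ c - y := by
    rw [← mul_div_assoc, div_le_iff₀ hdx]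
    nlinarith [mul_nonneg (by linarith : (0:ℝ) ≤ c - d) (by linarith : (0:ℝ) ≤ y - x)]
  calc (c - x) * klB y d ≤ (c - x) * (((d - y) / (d - x)) * klB x d) :=
        mul_le_mul_of_nonneg_left hcombo hcx
    _ = ((c - x) * ((d - y) / (d - x))) * klB x d := by ring
    _ ≤ (c - y) * klB x d := mul_le_mul_of_nonneg_right hstep hKx.le
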